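/- Let Γ be a countable discrete group and b a measure-preserving action of Γ on a probability space (Y,ν). Then for every n,k ∈ ℕ, the closed convex hull of C_{n,k}(b) in [0,1]^{n×k×k} is contained in C_{n,k}(ι × b), where ι is the trivial action of Γ on a standard probability space and ι × b is the product action on the product probability space. -/

import Mathlib

open MeasureTheory Filter Topology Set

/-- A measure-preserving action of a group `Γ` on a measure space `(X, μ)`. -/
structure MPAction (Γ : Type*) [Group Γ] (X : Type*) [MeasurableSpace X]
    (μ : MeasureTheory.Measure X) where
  act : Γ → X → X
  measurePreserving_act : ∀ γ : Γ, MeasureTheory.MeasurePreserving (act γ) μ μ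
  act_one : ∀ x, act 1 x = x
  act_mul : ∀ γ δ x, act (γ * δ) x = act γ (act δ x)

namespace MPAction

variable {Γ : Type*} [Group Γ] {X : Type*} [MeasurableSpace X] {μ : Measure X}
  {Y : Type*} [MeasurableSpace Y] {ν : Measure Y}
  {W : Type*} [MeasurableSpace W] {ρ : Measure W}

/-- Weak containment of measure-preserving actions. -/
def WeaklyContained (a : MPAction Γ X μ) (b : MPAction Γ Y ν) : Prop :=
  ∀ (n : ℕ) (A : Fin n → Set X), (∀ i, MeasurableSet (A i)) →
    ∀ (F : Finset Γ) (ε : ℝ), 0 < ε →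
      ∃ B : Fin n → Set Y, (∀ i, MeasurableSet (B i)) ∧
        ∀ γ ∈ F, ∀ i j : Fin n,
          |(μ (a.act γ '' A i ∩ A j)).toReal - (ν (b.act γ '' B i ∩ B j)).toReal| < ε

/-- Weak equivalence of measure-preserving actions. -/
def WeakEquiv (a : MPAction Γ X μ) (b : MPAction Γ Y ν) : Prop :=
  WeaklyContained a b ∧ WeaklyContained b a

/-- A finite measurable partition of the space. -/
def IsPartition {k : ℕ} (A : Fin k → Set X) : Prop :=
  (∀ i, MeasurableSet (A i)) ∧ Pairwise (Function.onFun Disjoint A) ∧ (⋃ i, A i) = Set.univ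

/-- The compact set `C_{n,k}(a) ⊆ [0,1]^{n × k × k}`: the closure of the collection of
matrices of measures `μ(γ_p^a A_q ∩ A_r)` over all measurable `k`-partitions, with respect
to the fixed enumeration `e` of the group. -/
noncomputable def Cnk (e : ℕ → Γ) (a : MPAction Γ X μ) (n k : ℕ) :
    Set ((Fin n × Fin k × Fin k) → ℝ) :=
  closure { v | ∃ A : Fin k → Set X, IsPartition A ∧
    ∀ (p : Fin n) (q r : Fin k), v (p, q, r) = (μ (a.act (e p.1) '' A q ∩ A r)).toReal }

/-- The metric `d` on weak equivalence classes:
`d(a,b) = Σ_{n,k} 2^{-(n+k)} d_H(C_{n,k}(a), C_{n,k}(b))`. -/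
noncomputable def dWE (e : ℕ → Γ) (a : MPAction Γ X μ) (b : MPAction Γ Y ν) : ℝ :=
  ∑' nk : ℕ × ℕ, (2 : ℝ) ^ (-(nk.1 : ℤ) - (nk.2 : ℤ)) *
    Metric.hausdorffDist (Cnk e a nk.1 nk.2) (Cnk e b nk.1 nk.2)

section Mix

variable {ι : Type*} {Z : ι → Type*} [∀ i, MeasurableSpace (Z i)]

theorem measurable_sigmaMk' (i : ι) : Measurable (@Sigma.mk ι Z i) :=
  measurable_iff_le_map.2 (iInf_le _ i)

theorem measurable_of_sigma {δ : Type*} [MeasurableSpace δ] {f : Sigma Z → δ}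
    (hf : ∀ i, Measurable (f ∘ Sigma.mk i)) : Measurable f := by
  intro s hs
  rw [Sigma.instMeasurableSpace, MeasurableSpace.measurableSet_iInf]
  intro i
  exact hf i hs

/-- The measure `Σ_i λ_i ν_i` on the disjoint union `⊔_i Z_i`. -/
noncomputable def mixMeasure (lam : ι → ℝ) (νs : ∀ i, Measure (Z i)) :
    Measure ((i : ι) × Z i) :=
  Measure.sum fun i => ENNReal.ofReal (lam i) • (νs i).map (Sigma.mk i)

instance mixMeasure.instSFinite [Countable ι] (lam : ι → ℝ) (νs : ∀ i, Measure (Z i))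
    [∀ i, SFinite (νs i)] : SFinite (mixMeasure lam νs) := by
  unfold mixMeasure
  infer_instance

/-- The convex combination `Σ_i λ_i a_i` of measure-preserving actions, acting on the
disjoint union `⊔_i Z_i` with the measure `Σ_i λ_i ν_i`. -/
noncomputable def mix [Countable ι] {νs : ∀ i, Measure (Z i)} (lam : ι → ℝ)
    (a : ∀ i, MPAction Γ (Z i) (νs i)) : MPAction Γ ((i : ι) × Z i) (mixMeasure lam νs) where
  act γ p := ⟨p.1, (a p.1).act γ p.2⟩
  measurePreserving_act γ := by
    have hmeas : Measurable fun p : (i : ι) × Z i => (⟨p.1, (a p.1).act γ p.2⟩ : (i : ι) × Z i) := by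
      apply measurable_of_sigma
      intro i
      exact (measurable_sigmaMk' i).comp ((a i).measurePreserving_act γ).measurable
    refine ⟨hmeas, ?_⟩
    refine Measure.ext fun s hs => ?_
    rw [Measure.map_apply hmeas hs]
    rw [mixMeasure, Measure.sum_apply _ (hmeas hs), Measure.sum_apply _ hs]
    congr 1
    funext i
    rw [Measure.smul_apply, Measure.smul_apply,
      Measure.map_apply (measurable_sigmaMk' i) (hmeas hs),
      Measure.map_apply (measurable_sigmaMk' i) hs]
    congr 1
    have hpre : (Sigma.mk i) ⁻¹'
        ((fun p : (i : ι) × Z i => (⟨p.1, (a p.1).act γ p.2⟩ : (i : ι) × Z i)) ⁻¹' s)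
        = ((a i).act γ) ⁻¹' (Sigma.mk i ⁻¹' s) := rfl
    rw [hpre]
    exact ((a i).measurePreserving_act γ).measure_preimage
      ((measurable_sigmaMk' i) hs).nullMeasurableSet
  act_one p := by
    cases p with
    | mk i x => simp only [(a i).act_one]
  act_mul γ δ p := by
    cases p with
    | mk i x => simp only [(a i).act_mul]

end Mix

/-- The binary convex combination `t a + (1 - t) b` of two actions on `(X, μ)`,
realized on the disjoint union of two copies of `X` carrying measures `tμ` and `(1-t)μ`. -/
noncomputable def convComb (t : ℝ) (a b : MPAction Γ X μ) :
    MPAction Γ ((_ : Fin 2) × X) (mixMeasure ![t, 1 - t] fun _ => μ) :=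
  mix (νs := fun _ => μ) ![t, 1 - t] ![a, b]

/-- The trivial action. -/
def trivAction (Γ : Type*) [Group Γ] (Y : Type*) [MeasurableSpace Y] (ν : Measure Y) :
    MPAction Γ Y ν where
  act _ y := y
  measurePreserving_act _ := MeasurePreserving.id ν
  act_one _ := rfl
  act_mul _ _ _ := rfl

/-- The product of two measure-preserving actions. -/
noncomputable def prodAction [SFinite μ] [SFinite ν] (a : MPAction Γ X μ) (b : MPAction Γ Y ν) :
    MPAction Γ (X × Y) (μ.prod ν) where
  act γ := Prod.map (a.act γ) (b.act γ)
  measurePreserving_act γ := (a.measurePreserving_act γ).prod (b.measurePreserving_act γ)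
  act_one p := by simp [Prod.map, a.act_one, b.act_one]
  act_mul γ δ p := by simp [Prod.map, a.act_mul, b.act_mul]

/-- Stable weak containment: `a ≺_s b` iff `a ≺ ι × b`, where `ι` is the trivial action of `Γ`
on the standard probability space `(X₀, μ₀)`. -/
def StableWeaklyContained {X₀ : Type*} [MeasurableSpace X₀] (μ₀ : Measure X₀) [SFinite μ₀]
    (a : MPAction Γ W ρ) (b : MPAction Γ Y ν) [SFinite ν] : Prop :=
  WeaklyContained a (prodAction (trivAction Γ X₀ μ₀) b)

/-- Stable weak equivalence. -/
def StableWeakEquiv {X₀ : Type*} [MeasurableSpace X₀] (μ₀ : Measure X₀) [SFinite μ₀]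
    (a : MPAction Γ W ρ) [SFinite ρ] (b : MPAction Γ Y ν) [SFinite ν] : Prop :=
  StableWeaklyContained μ₀ a b ∧ StableWeaklyContained μ₀ b a

/-- An action is ergodic if every strictly invariant measurable set is null or conull. -/
def IsErgodicAction (a : MPAction Γ X μ) : Prop :=
  ∀ A : Set X, MeasurableSet A → (∀ γ, a.act γ ⁻¹' A = A) → μ A = 0 ∨ μ Aᶜ = 0

/-- An action is (essentially) free if almost every point has trivial stabilizer. -/
def IsFreeAction (a : MPAction Γ X μ) : Prop :=
  ∀ᵐ x ∂μ, ∀ γ : Γ, γ ≠ 1 → a.act γ x ≠ x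

end MPAction

/-!
Given points `vᵢ ∈ C_{n,k}(b)` realized by partitions `Aⁱ` of `Y` and convex weights `tᵢ`, split
`W` into measurable pieces `Vᵢ` with `ρ(Vᵢ) = tᵢ` and set `B_q = ⋃ᵢ Vᵢ × Aⁱ_q`. The trivial action
preserves each slab `Vᵢ × Y`, so `(ρ ⊗ ν)(γ B_q ∩ B_r) = ∑ᵢ tᵢ ν(γ Aⁱ_q ∩ Aⁱ_r)`: every convex
combination of exactly realized points of `b` is an exactly realized point of `ι × b`, and taking
closures gives the inclusion. The pieces `Vᵢ` exist because a nonatomic standard probability space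
takes every value in `[0, 1]` on measurable sets: embed it into `ℝ`, where the distribution
function of the image measure is continuous.
-/

open ProbabilityTheory Function

lemma continuous_cdf_of_nullSingletonClass (μ : Measure ℝ) [IsProbabilityMeasure μ]
    [NullSingletonClass μ] : Continuous (cdf μ) := by
  refine continuous_iff_continuousAt.2 fun x => ?_
  rw [(monotone_cdf μ).continuousAt_iff_leftLim_eq_rightLim, StieltjesFunction.rightLim_eq]
  have h := (cdf μ).measure_singleton x
  rw [measure_cdf, measure_singleton, eq_comm, ENNReal.ofReal_eq_zero, sub_nonpos] at h
  exact le_antisymm ((monotone_cdf μ).leftLim_le le_rfl) h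

lemma exists_measureReal_Iic_eq (μ : Measure ℝ) [IsProbabilityMeasure μ] [NullSingletonClass μ]
    {r : ℝ} (hr : r ∈ Ioo 0 1) : ∃ x, μ.real (Iic x) = r := by
  simp_rw [← cdf_eq_real]
  exact mem_range_of_exists_le_of_exists_ge (continuous_cdf_of_nullSingletonClass μ)
    (((tendsto_cdf_atBot μ).eventually_lt_const hr.1).exists.imp fun _ => le_of_lt)
    (((tendsto_cdf_atTop μ).eventually_const_lt hr.2).exists.imp fun _ => le_of_lt)

lemma MeasurableEmbedding.nullSingletonClass_map {α β : Type*} [MeasurableSpace α]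
    [MeasurableSpace β] {f : α → β} (hf : MeasurableEmbedding f) (μ : Measure α)
    [NullSingletonClass μ] : NullSingletonClass (μ.map f) :=
  ⟨fun y => by
    rw [hf.map_apply]
    exact (subsingleton_singleton.preimage hf.injective).measure_zero μ⟩

instance ProbabilityTheory.cond.instNullSingletonClass {α : Type*} [MeasurableSpace α]
    (μ : Measure α) [NullSingletonClass μ] (s : Set α) : NullSingletonClass μ[|s] :=
  ⟨fun x => by simp [cond]⟩

lemma Fin.pairwise_disjoint_cons {α : Type*} {n : ℕ} {s : Set α} {f : Fin n → Set α}
    (hs : ∀ i, Disjoint s (f i)) (hf : Pairwise (Disjoint on f)) :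
    Pairwise (Disjoint on (Fin.cons s f : Fin (n + 1) → Set α)) := by
  intro i j hij
  induction i using Fin.cases with
  | zero =>
    induction j using Fin.cases with
    | zero => exact absurd rfl hij
    | succ j => exact hs j
  | succ i =>
    induction j using Fin.cases with
    | zero => exact (hs i).symm
    | succ j => exact hf fun h => hij (congrArg Fin.succ h)

section StandardBorel

variable {W : Type*} [MeasurableSpace W] [StandardBorelSpace W]

lemma exists_measurableSet_measureReal_eq (ρ : Measure W) [IsProbabilityMeasure ρ]
    [NullSingletonClass ρ] {r : ℝ} (hr : r ∈ Icc 0 1) : ∃ t, MeasurableSet t ∧ ρ.real t = r := by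
  rcases hr.1.eq_or_lt with rfl | hr0
  · exact ⟨∅, .empty, measureReal_empty⟩
  rcases hr.2.eq_or_lt with rfl | hr1
  · exact ⟨univ, .univ, probReal_univ⟩
  obtain ⟨f, hf⟩ := exists_measurableEmbedding_real W
  have := Measure.isProbabilityMeasure_map (μ := ρ) hf.measurable.aemeasurable
  have := hf.nullSingletonClass_map ρ
  obtain ⟨x, hx⟩ := exists_measureReal_Iic_eq (ρ.map f) ⟨hr0, hr1⟩
  exact ⟨f ⁻¹' Iic x, hf.measurable measurableSet_Iic, by rwa [measureReal_def, ← hf.map_apply]⟩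

lemma exists_subset_measureReal_eq (ρ : Measure W) [IsFiniteMeasure ρ] [NullSingletonClass ρ]
    {S : Set W} (hS : MeasurableSet S) {r : ℝ} (hr : r ∈ Icc 0 (ρ.real S)) :
    ∃ t ⊆ S, MeasurableSet t ∧ ρ.real t = r := by
  rcases (hr.1.trans hr.2).eq_or_lt with hS0 | hSpos
  · obtain rfl : r = 0 := le_antisymm (hS0 ▸ hr.2) hr.1
    exact ⟨∅, empty_subset S, .empty, measureReal_empty⟩
  have := cond_isProbabilityMeasure (μ := ρ) (s := S)
    fun h => by simp [measureReal_def, h] at hSpos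
  obtain ⟨t, ht, hρt⟩ := exists_measurableSet_measureReal_eq ρ[|S] (r := r / ρ.real S)
    ⟨div_nonneg hr.1 hSpos.le, div_le_one_of_le₀ hr.2 hSpos.le⟩
  refine ⟨S ∩ t, inter_subset_left, hS.inter ht, ?_⟩
  rw [measureReal_def, ← cond_mul_eq_inter hS, ENNReal.toReal_mul, ← measureReal_def,
    ← measureReal_def, hρt, div_mul_cancel₀ _ hSpos.ne']

lemma exists_fin_partition_measureReal_eq (ρ : Measure W) [IsFiniteMeasure ρ]
    [NullSingletonClass ρ] {m : ℕ} (w : Fin (m + 1) → ℝ) (hw : ∀ i, 0 ≤ w i)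
    {S : Set W} (hS : MeasurableSet S) (hsum : ∑ i, w i = ρ.real S) :
    ∃ V : Fin (m + 1) → Set W, (∀ i, MeasurableSet (V i)) ∧ Pairwise (Disjoint on V) ∧
      ⋃ i, V i = S ∧ ∀ i, ρ.real (V i) = w i := by
  induction m generalizing S with
  | zero =>
    refine ⟨fun _ => S, fun _ => hS, Subsingleton.pairwise (α := Fin 1), iUnion_const S,
      fun i => ?_⟩
    rw [← hsum, Fin.sum_univ_one, Fin.eq_zero i]
  | succ m ih =>
    rw [Fin.sum_univ_succ] at hsum
    have hw0 : w 0 ≤ ρ.real S := hsum ▸ le_add_of_nonneg_right (Finset.sum_nonneg fun i _ => hw _)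
    obtain ⟨t, htS, ht, hρt⟩ := exists_subset_measureReal_eq ρ hS ⟨hw 0, hw0⟩
    obtain ⟨V, hVm, hVd, hVu, hρV⟩ := ih (fun i => w i.succ) (fun i => hw _) (hS.diff ht)
      (by rw [measureReal_sdiff htS ht, hρt]; linarith)
    refine ⟨Fin.cons t V, fun i => Fin.cases ht hVm i,
      Fin.pairwise_disjoint_cons
        (fun i => disjoint_sdiff_right.mono_right (hVu ▸ subset_iUnion V i)) hVd,
      ?_, fun i => Fin.cases hρt hρV i⟩
    rw [← sUnion_range, Fin.range_cons, sUnion_insert, sUnion_range, hVu, union_sdiff_cancel htS]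

lemma exists_partition_measureReal_eq {ι : Type*} [Fintype ι] [Nonempty ι] (ρ : Measure W)
    [IsFiniteMeasure ρ] [NullSingletonClass ρ] (w : ι → ℝ) (hw : ∀ i, 0 ≤ w i)
    {S : Set W} (hS : MeasurableSet S) (hsum : ∑ i, w i = ρ.real S) :
    ∃ V : ι → Set W, (∀ i, MeasurableSet (V i)) ∧ Pairwise (Disjoint on V) ∧
      ⋃ i, V i = S ∧ ∀ i, ρ.real (V i) = w i := by
  obtain ⟨m, hm⟩ := Nat.exists_eq_succ_of_ne_zero (Fintype.card_ne_zero (α := ι))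
  let e : ι ≃ Fin (m + 1) := (Fintype.equivFin ι).trans (finCongr hm)
  obtain ⟨V, hVm, hVd, hVu, hρV⟩ := exists_fin_partition_measureReal_eq ρ (w ∘ e.symm)
    (fun _ => hw _) hS (by rw [← hsum]; exact e.symm.sum_comp w)
  exact ⟨V ∘ e, fun i => hVm _, hVd.comp_of_injective e.injective,
    hVu ▸ e.surjective.iUnion_comp V, fun i => by simp [hρV]⟩

lemma iUnion_prod_inter_iUnion_prod {ι α β : Type*} {V : ι → Set α}
    (hV : Pairwise (Disjoint on V)) (s t : ι → Set β) :
    (⋃ i, V i ×ˢ s i) ∩ ⋃ i, V i ×ˢ t i = ⋃ i, V i ×ˢ (s i ∩ t i) := by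
  ext ⟨x, y⟩
  simp only [mem_inter_iff, mem_iUnion, mem_prod]
  constructor
  · rintro ⟨⟨i, hxi, hys⟩, j, hxj, hyt⟩
    obtain rfl : i = j := hV.eq (not_disjoint_iff.2 ⟨x, hxi, hxj⟩)
    exact ⟨i, hxi, hys, hyt⟩
  · rintro ⟨i, hxi, hys, hyt⟩
    exact ⟨⟨i, hxi, hys⟩, i, hxi, hyt⟩

namespace MPAction

variable {Γ : Type*} [Group Γ] {X : Type*} [MeasurableSpace X] {μ : Measure X}
  {Y : Type*} [MeasurableSpace Y] {ν : Measure Y}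
  {W : Type*} [MeasurableSpace W] {ρ : Measure W}

lemma image_act_eq_preimage (a : MPAction Γ X μ) (γ : Γ) (A : Set X) :
    a.act γ '' A = a.act γ⁻¹ ⁻¹' A :=
  congrFun (image_eq_preimage_of_inverse (f := a.act γ) (g := a.act γ⁻¹)
    (fun x => by rw [← a.act_mul, inv_mul_cancel, a.act_one])
    (fun x => by rw [← a.act_mul, mul_inv_cancel, a.act_one])) A

lemma measurableSet_image_act (a : MPAction Γ X μ) (γ : Γ) {A : Set X} (hA : MeasurableSet A) :
    MeasurableSet (a.act γ '' A) := by
  rw [image_act_eq_preimage]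
  exact (a.measurePreserving_act γ⁻¹).measurable hA

lemma isPartition_iUnion_prod {ι : Type*} [Countable ι] {k : ℕ} {V : ι → Set W}
    (hVm : ∀ i, MeasurableSet (V i)) (hVd : Pairwise (Disjoint on V)) (hVu : ⋃ i, V i = univ)
    {A : ι → Fin k → Set Y} (hA : ∀ i, IsPartition (A i)) :
    IsPartition fun q => ⋃ i, V i ×ˢ A i q := by
  refine ⟨fun q => .iUnion fun i => (hVm i).prod ((hA i).1 q), fun q r hqr => ?_, ?_⟩
  · rw [onFun, disjoint_iff_inter_eq_empty, iUnion_prod_inter_iUnion_prod hVd]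
    simp [disjoint_iff_inter_eq_empty.1 ((hA _).2.1 hqr)]
  · rw [iUnion_comm]
    simp [← prod_iUnion, (hA _).2.2, ← iUnion_prod_const, hVu]

lemma measureReal_prodAction_trivAction_image_inter {ι : Type*} [Fintype ι] [IsFiniteMeasure ρ]
    [IsFiniteMeasure ν] (b : MPAction Γ Y ν) {V : ι → Set W} (hVm : ∀ i, MeasurableSet (V i))
    (hVd : Pairwise (Disjoint on V)) {s t : ι → Set Y} (hs : ∀ i, MeasurableSet (s i))
    (ht : ∀ i, MeasurableSet (t i)) (γ : Γ) :
    (ρ.prod ν).real ((prodAction (trivAction Γ W ρ) b).act γ '' (⋃ i, V i ×ˢ s i) ∩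
      ⋃ i, V i ×ˢ t i) = ∑ i, ρ.real (V i) * ν.real (b.act γ '' s i ∩ t i) := by
  have himage : (prodAction (trivAction Γ W ρ) b).act γ '' (⋃ i, V i ×ˢ s i) =
      ⋃ i, V i ×ˢ (b.act γ '' s i) := by
    simp only [image_iUnion]
    exact iUnion_congr fun i =>
      (prodMap_image_prod id (b.act γ) (V i) (s i)).trans (by rw [image_id])
  rw [himage, iUnion_prod_inter_iUnion_prod hVd, measureReal_iUnion_fintype
    (hVd.mono fun i j h => h.set_prod_left _ _)
    fun i => (hVm i).prod ((b.measurableSet_image_act γ (hs i)).inter (ht i))]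
  simp_rw [measureReal_prod_prod]

def partitionMatrices (e : ℕ → Γ) (a : MPAction Γ X μ) (n k : ℕ) :
    Set ((Fin n × Fin k × Fin k) → ℝ) :=
  { v | ∃ A : Fin k → Set X, IsPartition A ∧
    ∀ (p : Fin n) (q r : Fin k), v (p, q, r) = (μ (a.act (e p.1) '' A q ∩ A r)).toReal }

lemma Cnk_eq_closure_partitionMatrices (e : ℕ → Γ) (a : MPAction Γ X μ) (n k : ℕ) :
    Cnk e a n k = closure (partitionMatrices e a n k) :=
  rfl

lemma convexHull_partitionMatrices_subset [StandardBorelSpace W] [IsProbabilityMeasure ρ]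
    [NullSingletonClass ρ] [IsFiniteMeasure ν] (e : ℕ → Γ) (b : MPAction Γ Y ν) (n k : ℕ) :
    convexHull ℝ (partitionMatrices e b n k) ⊆
      partitionMatrices e (prodAction (trivAction Γ W ρ) b) n k := by
  intro v hv
  obtain ⟨ι, _, w, z, hw0, hw1, hz, rfl⟩ := mem_convexHull_iff_exists_fintype.1 hv
  have : Nonempty ι := by
    by_contra h
    simp [not_nonempty_iff.1 h] at hw1
  choose A hA hzA using hz
  obtain ⟨V, hVm, hVd, hVu, hρV⟩ :=
    exists_partition_measureReal_eq ρ w hw0 .univ (by rw [hw1, probReal_univ])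
  refine ⟨fun q => ⋃ i, V i ×ˢ A i q, isPartition_iUnion_prod hVm hVd hVu hA, fun p q r => ?_⟩
  rw [← measureReal_def, measureReal_prodAction_trivAction_image_inter b hVm hVd
    (fun i => (hA i).1 q) (fun i => (hA i).1 r)]
  simp [Finset.sum_apply, hzA, hρV, measureReal_def]

end MPAction

theorem closedConvexHull_Cnk_subset_general
    (Γ : Type) [Group Γ]
    (Y : Type) [MeasurableSpace Y] (ν : Measure Y) [IsProbabilityMeasure ν]
    (b : MPAction Γ Y ν)
    (W : Type) [MeasurableSpace W] [StandardBorelSpace W]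
    (ρ : Measure W) [IsProbabilityMeasure ρ] [NullSingletonClass ρ]
    (e : ℕ → Γ)
    (n k : ℕ) :
    closure (convexHull ℝ (MPAction.Cnk e b n k)) ⊆
      MPAction.Cnk e (MPAction.prodAction (MPAction.trivAction Γ W ρ) b) n k := by
  rw [MPAction.Cnk_eq_closure_partitionMatrices, MPAction.Cnk_eq_closure_partitionMatrices,
    ← closedConvexHull_eq_closure_convexHull, closedConvexHull_closure_eq_closedConvexHull,
    closedConvexHull_eq_closure_convexHull]
  exact closure_mono (MPAction.convexHull_partitionMatrices_subset e b n k)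

/-- For any measure-preserving action `b` of a countable group `Γ` on a
probability space `(Y,ν)` and any `n, k`, the closed convex hull of `C_{n,k}(b)` is contained
in `C_{n,k}(ι × b)`, where `ι` is the trivial action of `Γ` on a standard probability space
`(W,ρ)` and `ι × b` is the product action. -/
theorem closedConvexHull_Cnk_subset
    (Γ : Type) [Group Γ] [Countable Γ]
    (Y : Type) [MeasurableSpace Y] (ν : Measure Y) [IsProbabilityMeasure ν]
    (b : MPAction Γ Y ν)
    (W : Type) [MeasurableSpace W] [StandardBorelSpace W]
    (ρ : Measure W) [IsProbabilityMeasure ρ] [NullSingletonClass ρ]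
    (e : ℕ → Γ) (he : Function.Surjective e)
    (n k : ℕ) :
    closure (convexHull ℝ (MPAction.Cnk e b n k)) ⊆
      MPAction.Cnk e (MPAction.prodAction (MPAction.trivAction Γ W ρ) b) n k :=
  closedConvexHull_Cnk_subset_general Γ Y ν b W ρ e n k
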